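/- Let F be the formal power series over ℚ whose coefficient of q^n is (n+1)·σ₁(n+1), i.e., F = Σ_{k≥1} k·σ₁(k)·q^{k−1}. Then for every natural number g ≥ 1, the Bryan–Leung count N_{g,7} := g · (coefficient of q^7 in F^{g−1}) satisfies N_{g,7} = (24/35)·g(g−1)(81g⁶ − 1053g⁵ + 7200g⁴ − 29970g³ + 75814g² − 106347g + 62685). -/

import Mathlib

/-!
For each fixed `n`, the coefficient of `q^n` in `F^m` is a polynomial in `m` of degree at most
`n`. Since `F^(m+1) = F^m · F`, the coefficients of `F^(m+1)` up to degree 7 are determined by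
those of `F^m` and by the first eight coefficients `1, 6, 12, 28, 30, 72, 56, 120` of `F`, so the
eight polynomials can be verified together by induction on `m`. Substituting `m = g - 1` into the
degree-7 polynomial gives the node polynomial.
-/

/-- The Bryan–Leung power series `F = Σ_{k≥1} k·σ₁(k)·q^{k−1}` over `ℚ`,
whose coefficient of `q^n` is `(n+1)·σ₁(n+1)`. -/
noncomputable def FBL : PowerSeries ℚ :=
  PowerSeries.mk fun n => (((n + 1) * ArithmeticFunction.sigma 1 (n + 1) : ℕ) : ℚ)

open PowerSeries

lemma coeff_pow_succ_eq_sum {R : Type*} [CommSemiring R] (f : R⟦X⟧) (m n : ℕ) :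
    coeff n (f ^ (m + 1)) = ∑ i ∈ Finset.range (n + 1), coeff i (f ^ m) * coeff (n - i) f := by
  rw [pow_succ, coeff_mul, Finset.Nat.sum_antidiagonal_eq_sum_range_succ_mk]

lemma coeff_FBL (n : ℕ) :
    coeff n FBL = (((n + 1) * ArithmeticFunction.sigma 1 (n + 1) : ℕ) : ℚ) := by
  simp [FBL]

lemma coeff_FBL_pow (m : ℕ) :
    coeff 0 (FBL ^ m) = 1 ∧
    coeff 1 (FBL ^ m) = 6 * (m : ℚ) ∧
    coeff 2 (FBL ^ m) = -6 * (m : ℚ) + 18 * (m : ℚ) ^ 2 ∧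
    coeff 3 (FBL ^ m) = 28 * (m : ℚ) - 36 * (m : ℚ) ^ 2 + 36 * (m : ℚ) ^ 3 ∧
    coeff 4 (FBL ^ m) = -102 * (m : ℚ) + 186 * (m : ℚ) ^ 2 - 108 * (m : ℚ) ^ 3 + 54 * (m : ℚ) ^ 4 ∧
    coeff 5 (FBL ^ m) = 1956 / 5 * (m : ℚ) - 780 * (m : ℚ) ^ 2 + 612 * (m : ℚ) ^ 3
      - 216 * (m : ℚ) ^ 4 + 324 / 5 * (m : ℚ) ^ 5 ∧
    coeff 6 (FBL ^ m) = -1488 * (m : ℚ) + 16756 / 5 * (m : ℚ) ^ 2 - 2880 * (m : ℚ) ^ 3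
      + 1332 * (m : ℚ) ^ 4 - 324 * (m : ℚ) ^ 5 + 324 / 5 * (m : ℚ) ^ 6 ∧
    coeff 7 (FBL ^ m) = 40368 / 7 * (m : ℚ) - 70656 / 5 * (m : ℚ) ^ 2 + 67848 / 5 * (m : ℚ) ^ 3
      - 6912 * (m : ℚ) ^ 4 + 2160 * (m : ℚ) ^ 5 - 1944 / 5 * (m : ℚ) ^ 6
      + 1944 / 35 * (m : ℚ) ^ 7 := by
  induction m with
  | zero => norm_num
  | succ m ih =>
    obtain ⟨h0, h1, h2, h3, h4, h5, h6, h7⟩ := ih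
    have F0 : coeff 0 FBL = 1 := by rw [coeff_FBL]; decide
    have F1 : coeff 1 FBL = 6 := by rw [coeff_FBL]; decide
    have F2 : coeff 2 FBL = 12 := by rw [coeff_FBL]; decide
    have F3 : coeff 3 FBL = 28 := by rw [coeff_FBL]; decide
    have F4 : coeff 4 FBL = 30 := by rw [coeff_FBL]; decide
    have F5 : coeff 5 FBL = 72 := by rw [coeff_FBL]; decide
    have F6 : coeff 6 FBL = 56 := by rw [coeff_FBL]; decide
    have F7 : coeff 7 FBL = 120 := by rw [coeff_FBL]; decide
    refine ⟨?_, ?_, ?_, ?_, ?_, ?_, ?_, ?_⟩ <;>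
    · simp only [coeff_pow_succ_eq_sum, Finset.sum_range_succ, Finset.sum_range_zero]
      simp only [h0, h1, h2, h3, h4, h5, h6, h7, F0, F1, F2, F3, F4, F5, F6, F7]
      push_cast
      ring

theorem N_g_7_general (g : ℕ) :
    (g : ℚ) * (PowerSeries.coeff (R := ℚ) 7) (FBL ^ (g - 1)) =
      (24 / 35 : ℚ) * (g : ℚ) * ((g : ℚ) - 1) * (81 * (g : ℚ) ^ 6 - 1053 * (g : ℚ) ^ 5 + 7200 * (g : ℚ) ^ 4 - 29970 * (g : ℚ) ^ 3 + 75814 * (g : ℚ) ^ 2 - 106347 * (g : ℚ) + 62685) := by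
  cases g with
  | zero => simp
  | succ m =>
    rw [Nat.add_sub_cancel, (coeff_FBL_pow m).2.2.2.2.2.2.2]
    push_cast
    ring

/-- The Bryan–Leung count `N_{g,7} := g · (coefficient of q^7 in F^{g−1})`
is given by the node polynomial of Table (5.1). -/
theorem N_g_7 (g : ℕ) (hg : 1 ≤ g) :
    (g : ℚ) * (PowerSeries.coeff (R := ℚ) 7) (FBL ^ (g - 1)) =
      (24 / 35 : ℚ) * (g : ℚ) * ((g : ℚ) - 1) * (81 * (g : ℚ) ^ 6 - 1053 * (g : ℚ) ^ 5 + 7200 * (g : ℚ) ^ 4 - 29970 * (g : ℚ) ^ 3 + 75814 * (g : ℚ) ^ 2 - 106347 * (g : ℚ) + 62685) :=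
  N_g_7_general g
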